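/- arXiv:2511.00257 — 2 statements merged into one kernel-verified Lean document; each statement's English description precedes it below -/
import Mathlib

section
/- Let 0 < ε ≤ 0.1, n ≥ 1, T ≥ 1. For any v* ∈ {1,…,n}, the expectation under P_{v*}^T of the likelihood ratio P_{v*}^T / P_0^T equals (1 + 4ε²)^T; that is, Σ_{g ∈ Ω^T} P_{v*}^T(g) · P_{v*}^T(g) / P_0^T(g) = (1 + 4ε²)^T. -/
open scoped BigOperators

/-- The sample space of a single round: an advice vector `a ∈ {0,1}ⁿ`
and a correct-arm indicator `c ∈ {0,1}`. -/
abbrev Omg (n : ℕ) := (Fin n → Bool) × Bool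

/-- Under `P0`, the advice vector is uniform on `{0,1}ⁿ` and the correct-arm
indicator is uniform on `{0,1}`, independently. -/
noncomputable def P0 (n : ℕ) : Omg n → ℝ := fun _ => (1 / 2 : ℝ) ^ (n + 1)

/-- Under `Pv n ε v`, the advice vector is uniform on `{0,1}ⁿ` and, conditionally on it,
the correct-arm indicator equals its `v`-th entry with probability `1/2 + ε`. -/
noncomputable def Pv (n : ℕ) (ε : ℝ) (v : Fin n) : Omg n → ℝ := fun w =>
  (1 / 2 : ℝ) ^ n * (if w.2 = w.1 v then 1 / 2 + ε else 1 / 2 - ε)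

/-- `T`-fold product of a probability mass function on `Omg n`. -/
noncomputable def prodP {n : ℕ} (T : ℕ) (P : Omg n → ℝ) : (Fin T → Omg n) → ℝ :=
  fun g => ∏ t, P (g t)

/-! The sum `∑ P · (P / Q)` is multiplicative under products, so it suffices to compute it for a
single round, where `Pv / P0 = 1 ± 2ε` and the two values of the correct-arm indicator contribute
`(1/2 + ε)(1 + 2ε) + (1/2 - ε)(1 - 2ε) = 1 + 4ε²` for every advice vector. -/

theorem sum_prodP_mul_div_prodP {n : ℕ} (T : ℕ) (P Q : Omg n → ℝ) :
    ∑ g : Fin T → Omg n, prodP T P g * (prodP T P g / prodP T Q g)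
      = (∑ w : Omg n, P w * (P w / Q w)) ^ T := by
  rw [Fintype.sum_pow]
  refine Finset.sum_congr rfl fun g _ => ?_
  simp only [prodP, ← Finset.prod_div_distrib, ← Finset.prod_mul_distrib]

theorem sum_bool_ite_eq_sq (b : Bool) (x y : ℝ) :
    ∑ c : Bool, (if c = b then x else y) ^ 2 = x ^ 2 + y ^ 2 := by
  cases b <;> simp [add_comm]

theorem Pv_mul_div_P0 (n : ℕ) (ε : ℝ) (v : Fin n) (w : Omg n) :
    Pv n ε v w * (Pv n ε v w / P0 n w)
      = (1 / 2 : ℝ) ^ n * (2 * (if w.2 = w.1 v then 1 / 2 + ε else 1 / 2 - ε) ^ 2) := by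
  simp only [Pv, P0, pow_succ]
  field_simp

theorem sum_Pv_mul_div_P0 (n : ℕ) (ε : ℝ) (v : Fin n) :
    ∑ w : Omg n, Pv n ε v w * (Pv n ε v w / P0 n w) = 1 + 4 * ε ^ 2 := by
  have h_advice (a : Fin n → Bool) :
      ∑ c : Bool, Pv n ε v (a, c) * (Pv n ε v (a, c) / P0 n (a, c))
        = (1 / 2 : ℝ) ^ n * (1 + 4 * ε ^ 2) := by
    simp only [Pv_mul_div_P0, ← Finset.mul_sum, sum_bool_ite_eq_sq]
    ring
  rw [Fintype.sum_prod_type]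
  simp only [h_advice, Finset.sum_const, Finset.card_univ, Fintype.card_fun, Fintype.card_bool,
    Fintype.card_fin, nsmul_eq_mul, Nat.cast_pow, Nat.cast_ofNat, ← mul_assoc, ← mul_pow]
  norm_num

theorem stmt7_general (n T : ℕ) (ε : ℝ) (vstar : Fin n) :
    ∑ g : Fin T → Omg n,
        prodP T (Pv n ε vstar) g * (prodP T (Pv n ε vstar) g / prodP T (P0 n) g)
      = (1 + 4 * ε ^ 2) ^ T := by
  rw [sum_prodP_mul_div_prodP, sum_Pv_mul_div_P0]

/-- the expectation under `P_{v*}^T` of the likelihood ratio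
`P_{v*}^T / P_0^T` equals `(1 + 4ε²)^T`. -/
theorem stmt7 (n T : ℕ) (ε : ℝ) (hε : 0 < ε) (hε' : ε ≤ 0.1) (hn : 1 ≤ n) (hT : 1 ≤ T)
    (vstar : Fin n) :
    ∑ g : Fin T → Omg n,
        prodP T (Pv n ε vstar) g * (prodP T (Pv n ε vstar) g / prodP T (P0 n) g)
      = (1 + 4 * ε ^ 2) ^ T :=
  stmt7_general n T ε vstar
end

section
/- Let 0 < ε ≤ 0.1 and n ≥ 10, and let T be a positive integer with 4ε²·T ≤ ln(n/10). Then D_KL( P_mix^T ‖ P_0^T ) ≤ 1/10. -/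
/-!
Jensen's inequality for the logarithm bounds `D_KL(P ‖ Q)` by `log Σ P²/Q`. Writing
`s_v = ±1` according as `c = a_v`, one has `P_v = P_0 (1 + 2ε s_v)`, and under `P_0` the signs
are orthonormal: flipping `a_u` negates `s_u` and fixes every other `s_v`. Hence
`Σ P_u P_v / P_0 = 1 + 4ε² [u = v]` in one round, the `T`-fold products give the `T`-th power,
and averaging over `u, v` yields `Σ P_mix² / P_0 = 1 + ((1 + 4ε²)^T - 1)/n ≤ 1 + (e^{4ε²T} - 1)/n`,
which is at most `11/10` under the hypothesis; finally `log (11/10) ≤ 1/10`.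
-/

open scoped BigOperators

/-- The uniform mixture `P_mix^T = (1/n) Σ_v P_v^T`. -/
noncomputable def Pmix (n : ℕ) (ε : ℝ) (T : ℕ) : (Fin T → Omg n) → ℝ := fun g =>
  (1 / (n : ℝ)) * ∑ v : Fin n, prodP T (Pv n ε v) g

/-- Kullback–Leibler divergence between two probability mass functions on a finite type
(with the convention `0 · ln 0 = 0`, which holds definitionally here since
`Real.log 0 = 0` and `0 * x = 0`). -/
noncomputable def klDiv {α : Type*} [Fintype α] (P Q : α → ℝ) : ℝ :=
  ∑ g, P g * Real.log (P g / Q g)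


open Finset Real

section KullbackLeibler

variable {α : Type*} [Fintype α]

lemma klDiv_le_log_sum_sq_div {P Q : α → ℝ} (hP : ∀ g, 0 < P g) (hQ : ∀ g, 0 < Q g)
    (hP₁ : ∑ g, P g = 1) : klDiv P Q ≤ log (∑ g, P g ^ 2 / Q g) := by
  have jensen := strictConcaveOn_log_Ioi.concaveOn.le_map_sum (t := univ) (w := P)
    (p := fun g => P g / Q g) (fun g _ => (hP g).le) hP₁
    (fun g _ => Set.mem_Ioi.2 (div_pos (hP g) (hQ g)))
  simpa only [klDiv, smul_eq_mul, ← mul_div_assoc, ← sq] using jensen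

end KullbackLeibler

section Products

variable {n : ℕ}

lemma sum_prodP (T : ℕ) (P : Omg n → ℝ) : ∑ g, prodP T P g = (∑ w, P w) ^ T := by
  simp only [prodP, Fintype.sum_pow]

lemma sum_prodP_mul_div (T : ℕ) (P Q R : Omg n → ℝ) :
    ∑ g, prodP T P g * prodP T Q g / prodP T R g = (∑ w, P w * Q w / R w) ^ T := by
  simp only [prodP, ← prod_mul_distrib, ← prod_div_distrib, Fintype.sum_pow]

end Products

section SingleRound

variable {n : ℕ}

noncomputable def agreeSign (v : Fin n) (w : Omg n) : ℝ := if w.2 = w.1 v then 1 else -1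

def flipAdvice (u : Fin n) (w : Omg n) : Omg n := (Function.update w.1 u (!w.1 u), w.2)

lemma flipAdvice_involutive (u : Fin n) : Function.Involutive (flipAdvice u) := by
  intro w
  simp [flipAdvice]

lemma flipAdvice_ne (u : Fin n) (w : Omg n) : flipAdvice u w ≠ w := by
  intro h
  have := congrArg (fun w : Omg n => w.1 u) h
  simp [flipAdvice] at this

lemma agreeSign_flipAdvice_self (u : Fin n) (w : Omg n) :
    agreeSign u (flipAdvice u w) = -agreeSign u w := by
  unfold agreeSign flipAdvice
  cases w.2 <;> cases w.1 u <;> simp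

lemma agreeSign_flipAdvice_of_ne {u v : Fin n} (h : v ≠ u) (w : Omg n) :
    agreeSign v (flipAdvice u w) = agreeSign v w := by
  simp [agreeSign, flipAdvice, Function.update_of_ne h]

lemma agreeSign_mul_self (v : Fin n) (w : Omg n) : agreeSign v w * agreeSign v w = 1 := by
  unfold agreeSign
  split_ifs <;> norm_num

lemma sum_eq_zero_of_flipAdvice {F : Omg n → ℝ} (u : Fin n)
    (hF : ∀ w, F (flipAdvice u w) = -F w) : ∑ w, F w = 0 :=
  sum_ninvolution (flipAdvice u) (fun w => by rw [hF]; ring) (fun w _ => flipAdvice_ne u w)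
    (fun _ => mem_univ _) (flipAdvice_involutive u)

lemma sum_agreeSign (v : Fin n) : ∑ w, agreeSign v w = 0 :=
  sum_eq_zero_of_flipAdvice v (agreeSign_flipAdvice_self v)

lemma sum_agreeSign_mul_agreeSign (u v : Fin n) :
    ∑ w, agreeSign u w * agreeSign v w = if u = v then (Fintype.card (Omg n) : ℝ) else 0 := by
  split_ifs with h
  · simp [h, agreeSign_mul_self]
  · refine sum_eq_zero_of_flipAdvice u fun w => ?_
    rw [agreeSign_flipAdvice_self, agreeSign_flipAdvice_of_ne (Ne.symm h), neg_mul]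

lemma Pv_eq_P0_mul (ε : ℝ) (v : Fin n) (w : Omg n) :
    Pv n ε v w = P0 n w * (1 + 2 * ε * agreeSign v w) := by
  unfold Pv P0 agreeSign
  split_ifs <;> ring

lemma Pv_pos {ε : ℝ} (hε : |ε| < 1 / 2) (v : Fin n) (w : Omg n) : 0 < Pv n ε v w := by
  rw [abs_lt] at hε
  unfold Pv
  split_ifs <;> apply mul_pos (by positivity) <;> linarith

lemma sum_P0_mul (f : Omg n → ℝ) : ∑ w, P0 n w * f w = (1 / 2) ^ (n + 1) * ∑ w, f w :=
  (mul_sum ..).symm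

lemma half_pow_mul_card : (1 / 2 : ℝ) ^ (n + 1) * Fintype.card (Omg n) = 1 := by
  simp only [Fintype.card_prod, Fintype.card_fun, Fintype.card_bool, Fintype.card_fin,
    Nat.cast_mul, Nat.cast_pow, Nat.cast_ofNat]
  rw [← pow_succ, ← mul_pow]
  norm_num

lemma sum_Pv (ε : ℝ) (v : Fin n) : ∑ w, Pv n ε v w = 1 := by
  simp only [Pv_eq_P0_mul, sum_P0_mul, sum_add_distrib, ← mul_sum, sum_agreeSign, sum_const,
    card_univ, nsmul_eq_mul, mul_one, mul_zero, add_zero, half_pow_mul_card]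

lemma sum_Pv_mul_Pv_div_P0 (ε : ℝ) (u v : Fin n) :
    ∑ w, Pv n ε u w * Pv n ε v w / P0 n w = if u = v then 1 + 4 * ε ^ 2 else 1 := by
  have expand : ∀ w, Pv n ε u w * Pv n ε v w / P0 n w = P0 n w * (1 + 2 * ε * agreeSign u w
      + 2 * ε * agreeSign v w + 4 * ε ^ 2 * (agreeSign u w * agreeSign v w)) := by
    intro w
    rw [Pv_eq_P0_mul, Pv_eq_P0_mul]
    field_simp [show P0 n w ≠ 0 by simp [P0]]
    ring
  simp only [expand, sum_P0_mul, sum_add_distrib, ← mul_sum, sum_agreeSign,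
    sum_agreeSign_mul_agreeSign, sum_const, card_univ, nsmul_eq_mul]
  split_ifs
  · linear_combination (1 + 4 * ε ^ 2) * half_pow_mul_card (n := n)
  · linear_combination half_pow_mul_card (n := n)

end SingleRound

section Mixture

variable {n : ℕ} (ε : ℝ) (T : ℕ)

lemma sum_Pmix (hn : n ≠ 0) : ∑ g, Pmix n ε T g = 1 := by
  simp only [Pmix, ← mul_sum]
  rw [sum_comm]
  simp only [sum_prodP, sum_Pv, one_pow, sum_const, card_univ, Fintype.card_fin, nsmul_eq_mul,
    mul_one]
  exact one_div_mul_cancel (Nat.cast_ne_zero.2 hn)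

lemma prodP_P0_pos (g : Fin T → Omg n) : 0 < prodP T (P0 n) g := by
  unfold prodP P0
  positivity

lemma Pmix_pos (hn : n ≠ 0) (hε : |ε| < 1 / 2) (g : Fin T → Omg n) :
    0 < Pmix n ε T g := by
  have : Nonempty (Fin n) := ⟨⟨0, Nat.pos_of_ne_zero hn⟩⟩
  exact mul_pos (by positivity)
    (sum_pos (fun v _ => prod_pos fun t _ => Pv_pos hε v (g t)) univ_nonempty)

lemma sum_Pmix_sq_div (hn : n ≠ 0) :
    ∑ g, Pmix n ε T g ^ 2 / prodP T (P0 n) g = 1 + ((1 + 4 * ε ^ 2) ^ T - 1) / n := by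
  have expand : ∀ g, Pmix n ε T g ^ 2 / prodP T (P0 n) g = (1 / n) ^ 2 *
      ∑ u, ∑ v, prodP T (Pv n ε u) g * prodP T (Pv n ε v) g / prodP T (P0 n) g := by
    intro g
    rw [Pmix, mul_pow, sq (∑ v : Fin n, _), sum_mul_sum, mul_div_assoc, sum_div]
    simp only [sum_div]
  simp only [expand, ← mul_sum]
  rw [sum_comm, sum_congr rfl fun u _ => sum_comm]
  have diagonal : ∀ u v : Fin n, (if u = v then 1 + 4 * ε ^ 2 else 1) ^ T
      = (if u = v then (1 + 4 * ε ^ 2) ^ T - 1 else 0) + 1 := by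
    intro u v
    split_ifs <;> simp
  simp only [sum_prodP_mul_div, sum_Pv_mul_Pv_div_P0, diagonal, sum_add_distrib, sum_ite_eq,
    mem_univ, if_true, sum_const, card_univ, Fintype.card_fin, nsmul_eq_mul, mul_one]
  field_simp
  ring

end Mixture

lemma one_add_pow_le_exp_mul {x : ℝ} (hx : -1 ≤ x) (T : ℕ) : (1 + x) ^ T ≤ exp (x * T) := by
  rw [mul_comm, exp_nat_mul]
  gcongr
  · linarith
  · linarith [add_one_le_exp x]

theorem stmt9_general (n T : ℕ) (ε : ℝ) (hε : 0 < ε) (hε' : ε ≤ 0.1) (hn : 10 ≤ n)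
    (hεT : 4 * ε ^ 2 * (T : ℝ) ≤ Real.log ((n : ℝ) / 10)) :
    klDiv (Pmix n ε T) (prodP T (P0 n)) ≤ 1 / 10 := by
  have hn₀ : n ≠ 0 := by omega
  have hε_half : |ε| < 1 / 2 := abs_lt.2 ⟨by linarith, by norm_num at hε'; linarith⟩
  have growth : (1 + 4 * ε ^ 2) ^ T ≤ (n : ℝ) / 10 :=
    (one_add_pow_le_exp_mul (by nlinarith) T).trans ((le_log_iff_exp_le (by positivity)).1 hεT)
  have chi_pos : 0 < 1 + ((1 + 4 * ε ^ 2) ^ T - 1) / n :=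
    add_pos_of_pos_of_nonneg one_pos
      (div_nonneg (sub_nonneg.2 (one_le_pow₀ (by nlinarith))) n.cast_nonneg)
  have chi_le : 1 + ((1 + 4 * ε ^ 2) ^ T - 1) / n ≤ 11 / 10 := by
    have : ((1 + 4 * ε ^ 2) ^ T - 1) / n ≤ 1 / 10 := by
      rw [div_le_iff₀ (by positivity)]
      linarith
    linarith
  calc klDiv (Pmix n ε T) (prodP T (P0 n))
      ≤ log (∑ g, Pmix n ε T g ^ 2 / prodP T (P0 n) g) :=
        klDiv_le_log_sum_sq_div (Pmix_pos ε T hn₀ hε_half) (prodP_P0_pos T) (sum_Pmix ε T hn₀)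
    _ = log (1 + ((1 + 4 * ε ^ 2) ^ T - 1) / n) := by rw [sum_Pmix_sq_div ε T hn₀]
    _ ≤ log (11 / 10) := log_le_log chi_pos chi_le
    _ ≤ 11 / 10 - 1 := log_le_sub_one_of_pos (by norm_num)
    _ = 1 / 10 := by norm_num

/-- if `4ε²T ≤ ln(n/10)` then `D_KL(P_mix^T ‖ P_0^T) ≤ 1/10`. -/
theorem stmt9 (n T : ℕ) (ε : ℝ) (hε : 0 < ε) (hε' : ε ≤ 0.1) (hn : 10 ≤ n) (hT : 1 ≤ T)
    (hεT : 4 * ε ^ 2 * (T : ℝ) ≤ Real.log ((n : ℝ) / 10)) :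
    klDiv (Pmix n ε T) (prodP T (P0 n)) ≤ 1 / 10 :=
  stmt9_general n T ε hε hε' hn hεT
end
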